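/- Let p ≥ 2 and 2 ≤ j ≤ p−1, and let M > 0, h ≥ 1, ω, ψ as above with |ω| ≤ 1, 0 ≤ ψ ≤ 1, supp ψ ⊂ {|y| ≤ 1}. Define λ(x,ξ) = M·ω(ξ/h)·⟨ξ⟩_h^{−j+1}·∫₀ˣ ⟨y⟩^{−(p−j)/(p−1)} ψ(⟨y⟩/⟨ξ⟩_h^{p−1}) dy. Then |λ(x,ξ)| ≤ C·M·min( ⟨ξ⟩_h^{1−j} ⟨x⟩^{1−(p−j)/(p−1)}, 1 ) for all (x,ξ), with C depending only on p and j. -/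
import Mathlib

open MeasureTheory

private lemma key13 (α T : ℝ) (hα0 : 0 < α) (hα1 : α < 1) (hT : 1 ≤ T)
    (ψ : ℝ → ℝ) (hψc : Continuous ψ) (hψ01 : ∀ y, 0 ≤ ψ y ∧ ψ y ≤ 1)
    (hψ0 : ∀ y, 1 ≤ |y| → ψ y = 0) (x : ℝ) :
    |∫ y in (0:ℝ)..x, (1 + y ^ 2) ^ (-α/2) * ψ (Real.sqrt (1 + y ^ 2) / T)|
      ≤ 4/(1-α) * min ((1 + x ^ 2) ^ ((1-α)/2)) (T ^ (1-α)) := by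
  set f : ℝ → ℝ := fun y => (1 + y ^ 2) ^ (-α/2) * ψ (Real.sqrt (1 + y ^ 2) / T) with hf
  have hpos : ∀ y : ℝ, (0:ℝ) < 1 + y ^ 2 := fun y => by positivity
  have hfc : Continuous f := by
    apply Continuous.mul
    · exact (continuous_const.add (continuous_pow 2)).rpow_const
        (fun y => Or.inl (ne_of_gt (hpos y)))
    · exact hψc.comp (((continuous_const.add (continuous_pow 2)).sqrt).div_const T)
  have hf0 : ∀ y, 0 ≤ f y := fun y =>
    mul_nonneg (Real.rpow_nonneg (hpos y).le _) (hψ01 _).1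
  have h1α : 0 < 1 - α := by linarith
  -- Step 1
  have key1 : ∀ b : ℝ, 0 ≤ b → (∫ y in (0:ℝ)..b, f y) ≤ 2/(1-α) * (1+b) ^ (1-α) := by
    intro b hb
    have hle : ∀ y ∈ Set.Icc (0:ℝ) b, f y ≤ 2 * (1+y) ^ (-α) := by
      intro y hy
      have hy0 : 0 ≤ y := hy.1
      have h1 : f y ≤ (1 + y ^ 2) ^ (-α/2) :=
        (mul_le_of_le_one_right (Real.rpow_nonneg (hpos y).le _) (hψ01 _).2)
      have h2 : (1 + y ^ 2) ^ (-α/2) = (Real.sqrt (1 + y ^ 2)) ^ (-α) := by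
        rw [Real.sqrt_eq_rpow, ← Real.rpow_mul (hpos y).le]
        congr 1; ring
      have h3 : (1+y)/2 ≤ Real.sqrt (1 + y ^ 2) :=
        (Real.le_sqrt (by linarith) (hpos y).le).mpr (by nlinarith)
      have h4 : (Real.sqrt (1 + y ^ 2)) ^ (-α) ≤ ((1+y)/2) ^ (-α) :=
        Real.rpow_le_rpow_of_nonpos (by linarith) h3 (by linarith)
      have h5 : ((1+y)/2) ^ (-α) = (2:ℝ)^α * (1+y) ^ (-α) := by
        rw [Real.div_rpow (by linarith) (by norm_num), Real.rpow_neg (by norm_num : (0:ℝ) ≤ 2),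
          div_eq_mul_inv, inv_inv, mul_comm]
      have h6 : (2:ℝ)^α ≤ 2 := by
        calc (2:ℝ)^α ≤ (2:ℝ)^(1:ℝ) :=
              Real.rpow_le_rpow_of_exponent_le (by norm_num) hα1.le
          _ = 2 := Real.rpow_one 2
      calc f y ≤ (Real.sqrt (1 + y ^ 2)) ^ (-α) := h2 ▸ h1
        _ ≤ (2:ℝ)^α * (1+y) ^ (-α) := h5 ▸ h4
        _ ≤ 2 * (1+y) ^ (-α) :=
            mul_le_mul_of_nonneg_right h6 (Real.rpow_nonneg (by linarith [hy.1]) _)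
    have hgc : ContinuousOn (fun y : ℝ => 2 * (1+y) ^ (-α)) (Set.uIcc (0:ℝ) b) := by
      apply ContinuousOn.mul continuousOn_const
      apply ContinuousOn.rpow_const (by fun_prop)
      intro y hy
      rw [Set.uIcc_of_le hb] at hy
      exact Or.inl (by nlinarith [hy.1])
    have hcomp : (∫ y in (0:ℝ)..b, f y) ≤ ∫ y in (0:ℝ)..b, 2 * (1+y) ^ (-α) :=
      intervalIntegral.integral_mono_on hb (hfc.intervalIntegrable _ _)
        (hgc.intervalIntegrable) hle
    have hval : (∫ y in (0:ℝ)..b, (1+y) ^ (-α)) = ((1+b) ^ (1-α) - 1) / (1-α) := by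
      have := intervalIntegral.integral_comp_add_left (fun y : ℝ => y ^ (-α)) 1 (a := 0) (b := b)
      rw [this, integral_rpow (Or.inl (by linarith)), show -α + 1 = 1 - α by ring]
      norm_num
    calc (∫ y in (0:ℝ)..b, f y) ≤ ∫ y in (0:ℝ)..b, 2 * (1+y) ^ (-α) := hcomp
      _ = 2 * (((1+b) ^ (1-α) - 1) / (1-α)) := by
          rw [intervalIntegral.integral_const_mul, hval]
      _ ≤ 2 * ((1+b) ^ (1-α) / (1-α)) := by
          gcongr
          linarith [Real.rpow_nonneg (by linarith : (0:ℝ) ≤ 1+b) (1-α)]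
      _ = 2/(1-α) * (1+b) ^ (1-α) := by ring
  -- Step 2
  have key2 : ∀ b : ℝ, 0 ≤ b → (∫ y in (0:ℝ)..b, f y) ≤ 2/(1-α) * (2*T) ^ (1-α) := by
    intro b hb
    have hT0 : (0:ℝ) < T := by linarith
    set t₀ := Real.sqrt (T^2 - 1) with ht0def
    have ht00 : 0 ≤ t₀ := Real.sqrt_nonneg _
    have ht0T : t₀ ≤ T := by
      calc t₀ ≤ Real.sqrt (T^2) := Real.sqrt_le_sqrt (by nlinarith)
        _ = T := Real.sqrt_sq hT0.le
    have h1t : 1 + t₀^2 = T^2 := by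
      rw [ht0def, Real.sq_sqrt (by nlinarith)]; ring
    have hbound : ∀ c : ℝ, 0 ≤ c → c ≤ t₀ →
        (∫ y in (0:ℝ)..c, f y) ≤ 2/(1-α) * (2*T) ^ (1-α) := by
      intro c hc hct
      calc (∫ y in (0:ℝ)..c, f y) ≤ 2/(1-α) * (1+c) ^ (1-α) := key1 c hc
        _ ≤ 2/(1-α) * (2*T) ^ (1-α) := by
            apply mul_le_mul_of_nonneg_left _ (by positivity)
            exact Real.rpow_le_rpow (by linarith) (by nlinarith) h1α.le
    rcases le_or_gt b t₀ with hbt | hbt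
    · exact hbound b hb hbt
    · have hzero : (∫ y in t₀..b, f y) = 0 := by
        rw [← intervalIntegral.integral_zero (a := t₀) (b := b) (E := ℝ)]
        apply intervalIntegral.integral_congr
        intro y hy
        rw [Set.uIcc_of_le hbt.le] at hy
        have hyt : t₀ ≤ y := hy.1
        have hTy : T ≤ Real.sqrt (1 + y ^ 2) := by
          rw [show T = Real.sqrt (T^2) from (Real.sqrt_sq hT0.le).symm]
          apply Real.sqrt_le_sqrt; nlinarith
        have harg : 1 ≤ |Real.sqrt (1 + y ^ 2) / T| := by
          rw [abs_of_nonneg (by positivity)]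
          rw [le_div_iff₀ hT0]; linarith
        simp [hf, hψ0 _ harg]
      have hsplit : (∫ y in (0:ℝ)..b, f y) = (∫ y in (0:ℝ)..t₀, f y) + ∫ y in t₀..b, f y :=
        (intervalIntegral.integral_add_adjacent_intervals (hfc.intervalIntegrable _ _)
          (hfc.intervalIntegrable _ _)).symm
      rw [hsplit, hzero, add_zero]
      exact hbound t₀ ht00 le_rfl
  -- combine into min bound for nonneg x
  have hK : ∀ b : ℝ, 0 ≤ b →
      (∫ y in (0:ℝ)..b, f y) ≤ 4/(1-α) * min ((1 + b ^ 2) ^ ((1-α)/2)) (T ^ (1-α)) := by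
    intro b hb
    have hsq : (Real.sqrt (1 + b ^ 2)) ^ (1-α) = (1 + b ^ 2) ^ ((1-α)/2) := by
      rw [Real.sqrt_eq_rpow, ← Real.rpow_mul (hpos b).le]
      congr 1; ring
    rw [mul_min_of_nonneg _ _ (by positivity : (0:ℝ) ≤ 4/(1-α))]
    refine le_min ?_ ?_
    · have h1 : (1+b) ≤ 2 * Real.sqrt (1 + b ^ 2) := by
        have hs1 : 1 ≤ Real.sqrt (1 + b ^ 2) := Real.one_le_sqrt.mpr (by nlinarith)
        have hsb : b ≤ Real.sqrt (1 + b ^ 2) :=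
          (Real.le_sqrt hb (hpos b).le).mpr (by nlinarith)
        linarith
      calc (∫ y in (0:ℝ)..b, f y) ≤ 2/(1-α) * (1+b) ^ (1-α) := key1 b hb
        _ ≤ 2/(1-α) * (2 * Real.sqrt (1 + b ^ 2)) ^ (1-α) := by
            apply mul_le_mul_of_nonneg_left _ (by positivity)
            exact Real.rpow_le_rpow (by linarith) h1 h1α.le
        _ = 2/(1-α) * ((2:ℝ) ^ (1-α) * (Real.sqrt (1 + b ^ 2)) ^ (1-α)) := by
            rw [Real.mul_rpow (by norm_num) (Real.sqrt_nonneg _)]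
        _ ≤ 2/(1-α) * (2 * (Real.sqrt (1 + b ^ 2)) ^ (1-α)) := by
            apply mul_le_mul_of_nonneg_left _ (by positivity)
            apply mul_le_mul_of_nonneg_right _ (Real.rpow_nonneg (Real.sqrt_nonneg _) _)
            calc (2:ℝ) ^ (1-α) ≤ (2:ℝ) ^ (1:ℝ) :=
                  Real.rpow_le_rpow_of_exponent_le (by norm_num) (by linarith)
              _ = 2 := Real.rpow_one 2
        _ = 4/(1-α) * (1 + b ^ 2) ^ ((1-α)/2) := by rw [← hsq]; ring
    · calc (∫ y in (0:ℝ)..b, f y) ≤ 2/(1-α) * (2*T) ^ (1-α) := key2 b hb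
        _ = 2/(1-α) * ((2:ℝ) ^ (1-α) * T ^ (1-α)) := by
            rw [Real.mul_rpow (by norm_num) (by linarith)]
        _ ≤ 2/(1-α) * (2 * T ^ (1-α)) := by
            apply mul_le_mul_of_nonneg_left _ (by positivity)
            apply mul_le_mul_of_nonneg_right _ (Real.rpow_nonneg (by linarith) _)
            calc (2:ℝ) ^ (1-α) ≤ (2:ℝ) ^ (1:ℝ) :=
                  Real.rpow_le_rpow_of_exponent_le (by norm_num) (by linarith)
              _ = 2 := Real.rpow_one 2
        _ = 4/(1-α) * T ^ (1-α) := by ring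
  -- sign cases
  rcases le_or_gt 0 x with hx | hx
  · rw [abs_of_nonneg (intervalIntegral.integral_nonneg hx (fun u _ => hf0 u))]
    exact hK x hx
  · have heven : (∫ y in (0:ℝ)..x, f y) = - ∫ y in (0:ℝ)..(-x), f y := by
      have hc : (∫ y in (0:ℝ)..(-x), f (-y)) = ∫ y in (x:ℝ)..0, f y := by
        have h0 := intervalIntegral.integral_comp_neg (a := (0:ℝ)) (b := -x) f
        simp only [neg_neg, neg_zero] at h0
        exact h0
      have hev : ∀ y : ℝ, f (-y) = f y := by intro y; simp [hf]
      simp only [hev] at hc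
      rw [hc]
      exact intervalIntegral.integral_symm x 0
    rw [heven, abs_neg,
      abs_of_nonneg (intervalIntegral.integral_nonneg (by linarith) (fun u _ => hf0 u))]
    have := hK (-x) (by linarith)
    simpa using this

/-- Bound for the symbol
`λ_{p-j}(x,ξ) = M ω(ξ/h) ⟨ξ⟩ₕ^{−j+1} ∫₀ˣ ⟨y⟩^{−(p−j)/(p−1)} ψ(⟨y⟩/⟨ξ⟩ₕ^{p−1}) dy` (`2 ≤ j ≤ p−1`):
`|λ(x,ξ)| ≤ C·M·min(⟨ξ⟩ₕ^{1−j} ⟨x⟩^{1−(p−j)/(p−1)}, 1)` with `C = C(p,j)`. -/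
theorem stmt13 (p j : ℕ) (hp : 2 ≤ p) (hj : 2 ≤ j) (hjp : j ≤ p - 1) :
    ∃ C > (0 : ℝ), ∀ (h M : ℝ), 1 ≤ h → 0 < M →
      ∀ ω ψ : ℝ → ℝ, ContDiff ℝ (⊤ : ℕ∞) ω → (∀ y, |ω y| ≤ 1) →
        ContDiff ℝ (⊤ : ℕ∞) ψ → HasCompactSupport ψ →
        (∀ y, 0 ≤ ψ y ∧ ψ y ≤ 1) → (∀ y, 1 ≤ |y| → ψ y = 0) →
        ∀ x ξ : ℝ,
          |M * ω (ξ / h) * Real.sqrt (h ^ 2 + ξ ^ 2) ^ (-(j : ℝ) + 1) *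
              ∫ y in (0:ℝ)..x,
                (1 + y ^ 2) ^ (-((p : ℝ) - j) / (2 * ((p : ℝ) - 1))) *
                  ψ (Real.sqrt (1 + y ^ 2) / Real.sqrt (h ^ 2 + ξ ^ 2) ^ (p - 1))|
            ≤ C * M *
                min (Real.sqrt (h ^ 2 + ξ ^ 2) ^ ((1 : ℝ) - j) *
                      (1 + x ^ 2) ^ ((1 - ((p : ℝ) - j) / ((p : ℝ) - 1)) / 2))
                  1 := by
  have hpc : (2:ℝ) ≤ (p:ℝ) := by exact_mod_cast hp
  have hjc : (2:ℝ) ≤ (j:ℝ) := by exact_mod_cast hj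
  have hjpc : (j:ℝ) ≤ (p:ℝ) - 1 := by
    have : ((j:ℕ):ℝ) ≤ ((p-1:ℕ):ℝ) := by exact_mod_cast hjp
    rwa [Nat.cast_sub (by omega), Nat.cast_one] at this
  set α : ℝ := ((p:ℝ) - j) / ((p:ℝ) - 1) with hαdef
  have hp1 : (0:ℝ) < (p:ℝ) - 1 := by linarith
  have hα0 : 0 < α := by
    apply div_pos _ hp1; linarith
  have hα1 : α < 1 := by
    rw [hαdef, div_lt_one hp1]; linarith
  have h1α : (0:ℝ) < 1 - α := by linarith
  refine ⟨4/(1-α), by positivity, ?_⟩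
  intro h M hh hM ω ψ hωc hωb hψc _ hψ01 hψ0 x ξ
  set A := Real.sqrt (h ^ 2 + ξ ^ 2) with hA
  have hA1 : 1 ≤ A := Real.one_le_sqrt.mpr (by nlinarith)
  have hA0 : 0 < A := by linarith
  set T : ℝ := A ^ (p - 1) with hTdef
  have hT1 : 1 ≤ T := one_le_pow₀ hA1
  have hexp : -((p : ℝ) - j) / (2 * ((p : ℝ) - 1)) = -α/2 := by
    rw [hαdef]; field_simp
  have hkey := key13 α T hα0 hα1 hT1 ψ hψc.continuous hψ01 hψ0 x
  rw [show (-α/2) = -((p : ℝ) - j) / (2 * ((p : ℝ) - 1)) from hexp.symm] at hkey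
  -- T^(1-α) = A^(j-1)
  have hTpow : T ^ (1-α) = A ^ ((j:ℝ) - 1) := by
    rw [hTdef, ← Real.rpow_natCast A (p-1), ← Real.rpow_mul hA0.le]
    congr 1
    rw [Nat.cast_sub (by omega), Nat.cast_one, hαdef, mul_sub, mul_one,
      mul_div_cancel₀ _ (ne_of_gt hp1)]
    ring
  have habs : |M * ω (ξ / h) * A ^ (-(j : ℝ) + 1) *
      ∫ y in (0:ℝ)..x,
        (1 + y ^ 2) ^ (-((p : ℝ) - j) / (2 * ((p : ℝ) - 1))) *
          ψ (Real.sqrt (1 + y ^ 2) / T)|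
      ≤ M * A ^ (-(j : ℝ) + 1) *
        (4/(1-α) * min ((1 + x ^ 2) ^ ((1-α)/2)) (T ^ (1-α))) := by
    rw [abs_mul, abs_mul, abs_mul, abs_of_pos hM,
      abs_of_nonneg (Real.rpow_nonneg hA0.le _)]
    calc M * |ω (ξ / h)| * A ^ (-(j : ℝ) + 1) * _
        ≤ M * 1 * A ^ (-(j : ℝ) + 1) *
          (4/(1-α) * min ((1 + x ^ 2) ^ ((1-α)/2)) (T ^ (1-α))) := by
          apply mul_le_mul
          · apply mul_le_mul_of_nonneg_right _ (Real.rpow_nonneg hA0.le _)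
            exact mul_le_mul_of_nonneg_left (hωb _) hM.le
          · exact hkey
          · exact abs_nonneg _
          · positivity
      _ = M * A ^ (-(j : ℝ) + 1) *
          (4/(1-α) * min ((1 + x ^ 2) ^ ((1-α)/2)) (T ^ (1-α))) := by ring
  refine habs.trans ?_
  have hmin : A ^ (-(j : ℝ) + 1) * min ((1 + x ^ 2) ^ ((1-α)/2)) (T ^ (1-α))
      = min (A ^ ((1:ℝ) - j) * (1 + x ^ 2) ^ ((1-α)/2)) 1 := by
    rw [mul_min_of_nonneg _ _ (Real.rpow_nonneg hA0.le _), hTpow,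
      ← Real.rpow_add hA0, show (-(j:ℝ) + 1) + ((j:ℝ) - 1) = 0 by ring, Real.rpow_zero,
      show (-(j:ℝ) + 1) = (1:ℝ) - j by ring]
  calc M * A ^ (-(j : ℝ) + 1) *
      (4/(1-α) * min ((1 + x ^ 2) ^ ((1-α)/2)) (T ^ (1-α)))
      = 4/(1-α) * M * (A ^ (-(j : ℝ) + 1) * min ((1 + x ^ 2) ^ ((1-α)/2)) (T ^ (1-α))) := by
        ring
    _ = 4/(1-α) * M * min (A ^ ((1:ℝ) - j) * (1 + x ^ 2) ^ ((1-α)/2)) 1 := by rw [hmin]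
    _ ≤ 4/(1-α) * M * min (A ^ ((1:ℝ) - j) * (1 + x ^ 2) ^ ((1 - ((p : ℝ) - j) / ((p : ℝ) - 1))/2)) 1 := le_refl _
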